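/- Let z be a finite formal product of prime powers with attached finite abelian groups G_{z(x)} for each prime x | z, and let 𝒰_z be the universal norm distribution: the quotient of the free 𝒯-module 𝒜_z on symbols [g z'] (g ∈ G_{z'}, z' a stalk of z) by the 𝒯[G_z]-submodule generated by the elements λ_{z(x)}([g z']) = p(x; Fr_x^{-1})[g z'] − N_{z(x)}[g z(x) z'] for all x | z and stalks z' of z/z(x). Then 𝒰_z is a free 𝒯-module of rank |G_z| = ∏_{x|z} |G_{z(x)}|, with basis the images of those [g z'] such that the component of g in G_{z(x)} is nontrivial for every prime x | z'. -/

import Mathlib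

/-! Universal norm distribution scaffold.  The finite element `z` has prime set `ι`
(totally ordered), multiplicities recorded only through the finite abelian groups
`G x = G_{z(x)}`; `G_z = ∏_{x|z} G_{z(x)}`.  A basis symbol `[g z']` of `𝒜_z` is a pair
of a stalk (a subset `S ⊆ ι`) and a group element `g ∈ G_{z'} = ∏_{x∈S} G x`, encoded
as a function on all of `ι` which is trivial outside `S`. -/

/-- Basis symbols `[g z']` of `𝒜_z`. -/
def UndIdx (ι : Type) (G : ι → Type) [∀ i, CommGroup (G i)] : Type :=
  {q : Finset ι × (∀ i, G i) // ∀ i ∉ q.1, q.2 i = 1}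

section
variable (ι : Type) [Fintype ι] [LinearOrder ι]
  (G : ι → Type) [∀ i, CommGroup (G i)] [∀ i, Fintype (G i)]

/-- Action of `σ ∈ G_z` on a symbol `[g z']`: multiply the components in the stalk. -/
def undAct (σ : ∀ i, G i) (q : UndIdx ι G) : UndIdx ι G :=
  ⟨(q.1.1, fun i => if i ∈ q.1.1 then σ i * q.1.2 i else 1), fun _ hi => if_neg hi⟩

/-- The symbol `[g h z(x) z']` obtained from `[g z']` by extending the stalk by `z(x)`
with component `h ∈ G_{z(x)}`. -/
def undExt (x : ι) (h : G x) (q : UndIdx ι G) : UndIdx ι G :=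
  ⟨(insert x q.1.1, Function.update q.1.2 x h), by
    intro i hi
    have hix : i ≠ x := fun e => hi (e ▸ Finset.mem_insert_self x q.1.1)
    show Function.update q.1.2 x h i = 1
    rw [Function.update_of_ne hix]
    exact q.2 i fun hm => hi (Finset.mem_insert_of_mem hm)⟩

variable (𝒯 : Type) [CommRing 𝒯] (p : ι → Polynomial 𝒯) (fr : ι → ∀ i, G i)

/-- The distribution relation `λ_{z(x)}([g z']) = p(x; Fr_x^{-1})[g z'] − N_{z(x)}[g z(x) z']`
(for `x` not dividing the stalk `z'`), as an element of the free module `𝒜_z`. -/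
noncomputable def undLam (x : ι) (q : UndIdx ι G) : UndIdx ι G →₀ 𝒯 :=
  (∑ k ∈ (p x).support,
      Finsupp.single (undAct ι G (fun i => (fr x i)⁻¹ ^ k) q) ((p x).coeff k))
    - ∑ h : G x, Finsupp.single (undExt ι G x h q) 1

/-- The `𝒯[G_z]`-submodule `𝒟_z` of distribution relations: the `𝒯`-span of all
`G_z`-translates of the `λ_{z(x)}([g z'])`, `x ∤ z'`. -/
noncomputable def undRel : Submodule 𝒯 (UndIdx ι G →₀ 𝒯) :=
  Submodule.span 𝒯
    {v | ∃ (σ : ∀ i, G i) (x : ι) (q : UndIdx ι G), x ∉ q.1.1 ∧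
      v = Finsupp.mapDomain (undAct ι G σ) (undLam ι G 𝒯 p fr x q)}

/-- The universal norm distribution `𝒰_z = 𝒜_z/𝒟_z`. -/
noncomputable abbrev UND : Type := (UndIdx ι G →₀ 𝒯) ⧸ undRel ι G 𝒯 p fr

end

/-!
A symbol with a trivial component at some `x` can be rewritten, through the distribution
relation at `x`, in terms of symbols that are smaller for the lexicographic order on
(size of the stalk, number of trivial components). Always resolving at the least such `x`
defines a reduction `undReduce` of symbols to the free module on the claimed basis.

The point is that `undReduce` kills every relation, not only those used to define it. With
`P x = p(x; Fr_x⁻¹)`, `N x` the norm and `Δ x = P x - N x`, acting on functions of symbols,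
the Frobenius operators and the norms at distinct primes commute, whence
`N y * Δ x + P x * Δ y = N x * Δ y + P y * Δ x`. Evaluated at a symbol, every term except
one is a defect of `undReduce` at a smaller symbol or is zero by definition, so the
remaining defect vanishes too. Conversely every norm distribution is determined by its values
on the basis through `undReduce`, so the reduction descends to an isomorphism of `𝒰_z` with
the free module on the basis.
-/

open Finset

section Symbols

variable {ι : Type} {G : ι → Type} [∀ i, CommGroup (G i)]

theorem UndIdx.ext {q r : UndIdx ι G} (h₁ : q.1.1 = r.1.1) (h₂ : q.1.2 = r.1.2) : q = r :=
  Subtype.ext (Prod.ext h₁ h₂)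

abbrev UndBasisIdx (ι : Type) (G : ι → Type) [∀ i, CommGroup (G i)] : Type :=
  {q : UndIdx ι G // ∀ i ∈ q.1.1, q.1.2 i ≠ 1}

open Classical in
noncomputable def UndIdx.trivialSupport (q : UndIdx ι G) : Finset ι :=
  {i ∈ q.1.1 | q.1.2 i = 1}

theorem UndIdx.mem_trivialSupport {q : UndIdx ι G} {i : ι} :
    i ∈ q.trivialSupport ↔ i ∈ q.1.1 ∧ q.1.2 i = 1 := by
  simp [UndIdx.trivialSupport]

theorem UndIdx.trivialSupport_subset (q : UndIdx ι G) : q.trivialSupport ⊆ q.1.1 :=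
  fun _ hi => (UndIdx.mem_trivialSupport.1 hi).1

noncomputable def UndIdx.complexity (q : UndIdx ι G) : ℕ × ℕ :=
  (q.1.1.card, q.trivialSupport.card)

end Symbols

section Deletion

variable {ι : Type} [DecidableEq ι] {G : ι → Type} [∀ i, CommGroup (G i)]

def undDel (x : ι) (q : UndIdx ι G) : UndIdx ι G :=
  ⟨(q.1.1.erase x, Function.update q.1.2 x 1), fun i hi => by
    rcases eq_or_ne i x with rfl | h
    · exact Function.update_self ..
    · exact (Function.update_of_ne h _ _).trans (q.2 i fun hm => hi (mem_erase.2 ⟨h, hm⟩))⟩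

theorem UndIdx.trivialSupport_undDel (x : ι) (q : UndIdx ι G) :
    (undDel x q).trivialSupport = q.trivialSupport.erase x := by
  ext i
  simp only [UndIdx.mem_trivialSupport, mem_erase]
  show i ∈ q.1.1.erase x ∧ Function.update q.1.2 x 1 i = 1 ↔ _
  rcases eq_or_ne i x with rfl | h
  · simp
  · simp [h]

end Deletion

section Action

variable {ι : Type} [LinearOrder ι] {G : ι → Type} [∀ i, CommGroup (G i)]

theorem undAct_undAct (σ τ : ∀ i, G i) (q : UndIdx ι G) :
    undAct ι G σ (undAct ι G τ q) = undAct ι G (σ * τ) q :=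
  UndIdx.ext rfl <| funext fun i => by by_cases hi : i ∈ q.1.1 <;> simp [undAct, hi, mul_assoc]

theorem undAct_comm (σ τ : ∀ i, G i) (q : UndIdx ι G) :
    undAct ι G σ (undAct ι G τ q) = undAct ι G τ (undAct ι G σ q) := by
  rw [undAct_undAct, undAct_undAct, mul_comm]

theorem undAct_one (q : UndIdx ι G) : undAct ι G 1 q = q :=
  UndIdx.ext rfl <| funext fun i => by
    by_cases hi : i ∈ q.1.1
    · simp [undAct, hi]
    · simp [undAct, hi, q.2 i hi]

theorem undAct_undExt (σ : ∀ i, G i) (x : ι) (h : G x) (q : UndIdx ι G) :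
    undAct ι G σ (undExt ι G x h q) = undExt ι G x (σ x * h) (undAct ι G σ q) :=
  UndIdx.ext rfl <| funext fun i => by
    rcases eq_or_ne i x with rfl | hix
    · simp [undAct, undExt]
    · by_cases hi : i ∈ q.1.1 <;> simp [undAct, undExt, hi, hix, Function.update_of_ne]

theorem undExt_comm {x y : ι} (hxy : x ≠ y) (h : G x) (h' : G y) (q : UndIdx ι G) :
    undExt ι G x h (undExt ι G y h' q) = undExt ι G y h' (undExt ι G x h q) :=
  UndIdx.ext (insert_comm _ _ _) (Function.update_comm hxy.symm h' h q.1.2)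

theorem undDel_undExt {x : ι} {q : UndIdx ι G} (hx : x ∉ q.1.1) (h : G x) :
    undDel x (undExt ι G x h q) = q :=
  UndIdx.ext (erase_insert hx) <| funext fun i => by
    rcases eq_or_ne i x with rfl | hix
    · simp [undDel, undExt, q.2 i hx]
    · simp [undDel, undExt, Function.update_of_ne hix]

theorem undExt_undDel {x : ι} {q : UndIdx ι G} (hx : x ∈ q.trivialSupport) :
    undExt ι G x 1 (undDel x q) = q := by
  obtain ⟨hxq, hq1⟩ := UndIdx.mem_trivialSupport.1 hx
  refine UndIdx.ext (insert_erase hxq) <| funext fun i => ?_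
  rcases eq_or_ne i x with rfl | hix
  · simp [undDel, undExt, hq1]
  · simp [undDel, undExt, Function.update_of_ne hix]

theorem UndIdx.trivialSupport_undExt_one {x : ι} {q : UndIdx ι G} (hx : x ∉ q.1.1) :
    (undExt ι G x 1 q).trivialSupport = insert x q.trivialSupport := by
  ext i
  simp only [UndIdx.mem_trivialSupport, mem_insert]
  rcases eq_or_ne i x with rfl | hix
  · simp [undExt]
  · simp [undExt, hix]

theorem UndIdx.trivialSupport_undExt_of_ne_one {x : ι} {h : G x} {q : UndIdx ι G}
    (hx : x ∉ q.1.1) (hh : h ≠ 1) :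
    (undExt ι G x h q).trivialSupport = q.trivialSupport := by
  ext i
  simp only [UndIdx.mem_trivialSupport]
  rcases eq_or_ne i x with rfl | hix
  · simp [undExt, hh, hx]
  · simp [undExt, hix]

theorem UndIdx.complexity_undAct_undDel_lt (σ : ∀ i, G i) {x : ι} {q : UndIdx ι G}
    (hx : x ∈ q.1.1) :
    Prod.Lex (· < ·) (· < ·) (undAct ι G σ (undDel x q)).complexity q.complexity :=
  Prod.Lex.left _ _ (card_erase_lt_of_mem hx)

theorem UndIdx.complexity_undExt_undDel_lt {x y : ι} {h : G x} {q : UndIdx ι G}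
    (hy : y ∈ q.trivialSupport) (hx : x ∉ (undDel y q).1.1) (hh : h ≠ 1) :
    Prod.Lex (· < ·) (· < ·) (undExt ι G x h (undDel y q)).complexity q.complexity := by
  have hcard : (insert x (q.1.1.erase y)).card = q.1.1.card := by
    rw [card_insert_of_notMem (s := q.1.1.erase y) hx,
      card_erase_add_one (q.trivialSupport_subset hy)]
  rw [UndIdx.complexity, UndIdx.trivialSupport_undExt_of_ne_one hx hh,
    UndIdx.trivialSupport_undDel]
  exact hcard ▸ Prod.Lex.right _ (card_erase_lt_of_mem hy)

end Action

theorem LinearMap.commute_funLeft {R M α : Type*} [Semiring R] [AddCommMonoid M] [Module R M]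
    {f g : α → α} (h : ∀ a, f (g a) = g (f a)) : Commute (funLeft R M f) (funLeft R M g) := by
  simp only [Commute, SemiconjBy, Module.End.mul_eq_comp, ← LinearMap.funLeft_comp]
  exact congrArg _ (funext fun a => (h a).symm)

section Operators

variable {ι : Type} [LinearOrder ι] {G : ι → Type} [∀ i, CommGroup (G i)]
  {𝒯 : Type} [CommRing 𝒯] {p : ι → Polynomial 𝒯} {fr : ι → ∀ i, G i}
  {M : Type} [AddCommGroup M] [Module 𝒯 M]

variable (p fr) in
noncomputable def frobOp (x : ι) : Module.End 𝒯 (UndIdx ι G → M) :=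
  ∑ k ∈ (p x).support,
    (p x).coeff k • LinearMap.funLeft 𝒯 M (undAct ι G fun i => (fr x i)⁻¹ ^ k)

theorem frobOp_apply (F : UndIdx ι G → M) (x : ι) (q : UndIdx ι G) :
    frobOp p fr x F q =
      ∑ k ∈ (p x).support,
        (p x).coeff k • F (undAct ι G (fun i => (fr x i)⁻¹ ^ k) q) := by
  simp [frobOp, LinearMap.funLeft_apply]

theorem frobOp_apply_eq_zero {F : UndIdx ι G → M} {x : ι} {q : UndIdx ι G}
    (hF : ∀ σ, F (undAct ι G σ q) = 0) : frobOp p fr x F q = 0 := by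
  simp [frobOp_apply, hF]

theorem commute_funLeft_undAct_frobOp (σ : ∀ i, G i) (x : ι) :
    Commute (LinearMap.funLeft 𝒯 M (undAct ι G σ)) (frobOp p fr x) :=
  .sum_right _ _ _ fun _ _ => .smul_right (LinearMap.commute_funLeft (undAct_comm σ _)) _

theorem frobOp_commute (x y : ι) :
    Commute (frobOp p fr x : Module.End 𝒯 (UndIdx ι G → M)) (frobOp p fr y) :=
  .sum_left _ _ _ fun _ _ => .smul_left (commute_funLeft_undAct_frobOp _ y) _

variable [∀ i, Fintype (G i)]

variable (𝒯) in
noncomputable def normOp (x : ι) : Module.End 𝒯 (UndIdx ι G → M) :=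
  ∑ h : G x, LinearMap.funLeft 𝒯 M (undExt ι G x h)

variable (p fr) in
noncomputable def defectOp (x : ι) : Module.End 𝒯 (UndIdx ι G → M) :=
  frobOp p fr x - normOp 𝒯 x

theorem normOp_apply (F : UndIdx ι G → M) (x : ι) (q : UndIdx ι G) :
    normOp 𝒯 x F q = ∑ h : G x, F (undExt ι G x h q) := by
  simp [normOp, LinearMap.funLeft_apply]

open Classical in
theorem normOp_apply_eq_add (F : UndIdx ι G → M) (x : ι) (q : UndIdx ι G) :
    normOp 𝒯 x F q =
      F (undExt ι G x 1 q) + ∑ h : {h : G x // h ≠ 1}, F (undExt ι G x h q) :=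
  (normOp_apply F x q).trans (Fintype.sum_eq_add_sum_subtype_ne _ 1)

open Classical in
theorem defectOp_apply_eq_zero_iff (F : UndIdx ι G → M) (x : ι) (q : UndIdx ι G) :
    defectOp p fr x F q = 0 ↔
      F (undExt ι G x 1 q) =
        frobOp p fr x F q - ∑ h : {h : G x // h ≠ 1}, F (undExt ι G x h q) := by
  rw [defectOp, LinearMap.sub_apply, Pi.sub_apply, normOp_apply_eq_add, sub_eq_zero,
    eq_sub_iff_add_eq, eq_comm]

theorem commute_funLeft_undAct_normOp (σ : ∀ i, G i) (x : ι) :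
    Commute (LinearMap.funLeft 𝒯 M (undAct ι G σ)) (normOp 𝒯 x) := by
  refine LinearMap.ext fun F => funext fun q => ?_
  simp only [Module.End.mul_apply, normOp_apply, LinearMap.funLeft_apply, undAct_undExt]
  exact (Fintype.sum_equiv (Equiv.mulLeft (σ x)) _ _ fun _ => rfl).symm

theorem frobOp_commute_normOp (x y : ι) :
    Commute (frobOp p fr x : Module.End 𝒯 (UndIdx ι G → M)) (normOp 𝒯 y) :=
  .sum_left _ _ _ fun _ _ => .smul_left (commute_funLeft_undAct_normOp _ y) _

theorem normOp_commute {x y : ι} (hxy : x ≠ y) :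
    Commute (normOp 𝒯 x : Module.End 𝒯 (UndIdx ι G → M)) (normOp 𝒯 y) :=
  .sum_left _ _ _ fun _ _ => .sum_right _ _ _ fun _ _ =>
    LinearMap.commute_funLeft (undExt_comm hxy _ _)

theorem defectOp_comp_undAct (F : UndIdx ι G → M) (σ : ∀ i, G i) (x : ι) (q : UndIdx ι G) :
    defectOp p fr x (F ∘ undAct ι G σ) q = defectOp p fr x F (undAct ι G σ q) := by
  have hcomm : Commute (LinearMap.funLeft 𝒯 M (undAct ι G σ)) (defectOp p fr x) :=
    (commute_funLeft_undAct_frobOp σ x).sub_right (commute_funLeft_undAct_normOp σ x)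
  have h := congrFun (LinearMap.congr_fun hcomm.eq F) q
  rw [Module.End.mul_apply, Module.End.mul_apply, LinearMap.funLeft_apply] at h
  exact h.symm

/-- Both sides equal `frobOp x * frobOp y - normOp x * normOp y`. -/
theorem defectOp_cocycle {x y : ι} (hxy : x ≠ y) :
    (normOp 𝒯 y * defectOp p fr x + frobOp p fr x * defectOp p fr y :
      Module.End 𝒯 (UndIdx ι G → M)) =
    normOp 𝒯 x * defectOp p fr y + frobOp p fr y * defectOp p fr x := by
  simp only [defectOp, mul_sub]
  rw [(frobOp_commute_normOp x y).eq, (frobOp_commute_normOp y x).eq, (frobOp_commute x y).eq,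
    (normOp_commute hxy).eq]
  abel

end Operators

section Reduction

open Classical

variable {ι : Type} [LinearOrder ι] {G : ι → Type} [∀ i, CommGroup (G i)]
  [∀ i, Fintype (G i)]
  {𝒯 : Type} [CommRing 𝒯] {p : ι → Polynomial 𝒯} {fr : ι → ∀ i, G i}

variable (p fr) in
noncomputable def undReduce (q : UndIdx ι G) : UndBasisIdx ι G →₀ 𝒯 :=
  if hq : q.trivialSupport.Nonempty then
    let x := q.trivialSupport.min' hq
    (∑ k ∈ (p x).support,
        (p x).coeff k • undReduce (undAct ι G (fun i => (fr x i)⁻¹ ^ k) (undDel x q)))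
      - ∑ h : {h : G x // h ≠ 1}, undReduce (undExt ι G x h (undDel x q))
  else Finsupp.single ⟨q, fun i hi h1 => hq ⟨i, UndIdx.mem_trivialSupport.2 ⟨hi, h1⟩⟩⟩ 1
termination_by q.complexity
decreasing_by
  · exact UndIdx.complexity_undAct_undDel_lt _ (q.trivialSupport_subset (min'_mem _ _))
  · exact UndIdx.complexity_undExt_undDel_lt (min'_mem _ _) (notMem_erase _ _) h.2

theorem undReduce_of_forall_ne_one {q : UndIdx ι G} (hq : ∀ i ∈ q.1.1, q.1.2 i ≠ 1) :
    undReduce p fr q = Finsupp.single ⟨q, hq⟩ 1 := by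
  have hq' : ¬ q.trivialSupport.Nonempty := fun ⟨i, hi⟩ =>
    hq i (UndIdx.mem_trivialSupport.1 hi).1 (UndIdx.mem_trivialSupport.1 hi).2
  rw [undReduce, dif_neg hq']

theorem defectOp_undReduce_undDel_min' {q : UndIdx ι G} (hq : q.trivialSupport.Nonempty) :
    defectOp p fr (q.trivialSupport.min' hq) (undReduce p fr)
      (undDel (q.trivialSupport.min' hq) q) = 0 := by
  rw [defectOp_apply_eq_zero_iff, undExt_undDel (min'_mem _ hq), frobOp_apply]
  conv_lhs => rw [undReduce, dif_pos hq]

theorem defectOp_undReduce_eq_zero {x : ι} {t : UndIdx ι G} (hx : x ∉ t.1.1) :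
    defectOp p fr x (undReduce p fr) t = 0 := by
  have hq : (undExt ι G x 1 t).trivialSupport.Nonempty :=
    ⟨x, by simp [UndIdx.trivialSupport_undExt_one hx]⟩
  set x₀ := (undExt ι G x 1 t).trivialSupport.min' hq with hx₀_def
  have hmin := defectOp_undReduce_undDel_min' (p := p) (fr := fr) hq
  rw [← hx₀_def] at hmin
  by_cases hx₀x : x₀ = x
  · rwa [hx₀x, undDel_undExt hx] at hmin
  have hx₀t : x₀ ∈ t.trivialSupport := by
    have : x₀ ∈ (undExt ι G x 1 t).trivialSupport := min'_mem _ hq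
    rw [UndIdx.trivialSupport_undExt_one hx] at this
    exact (mem_insert.1 this).resolve_left hx₀x
  -- Otherwise `t = undExt x₀ 1 s`, and the cocycle identity at `s` isolates the defect at `t`.
  set s := undDel x₀ t
  have hts : undExt ι G x₀ 1 s = t := undExt_undDel hx₀t
  have hx₀s : x₀ ∉ s.1.1 := notMem_erase _ _
  have hxs : x ∉ s.1.1 := fun h => hx (erase_subset _ _ h)
  have hx₀xs : ∀ h : G x, x₀ ∉ (undExt ι G x h s).1.1 := fun _ h =>
    hx₀x ((mem_insert.1 h).resolve_right hx₀s)
  have hxx₀s : ∀ h : G x₀, x ∉ (undExt ι G x₀ h s).1.1 := fun _ h =>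
    hx₀x ((mem_insert.1 h).resolve_right hxs).symm
  have hfrob : frobOp p fr x (defectOp p fr x₀ (undReduce p fr)) s = 0 :=
    frobOp_apply_eq_zero fun σ => defectOp_undReduce_eq_zero (t := undAct ι G σ s) hx₀s
  have hfrob' : frobOp p fr x₀ (defectOp p fr x (undReduce p fr)) s = 0 :=
    frobOp_apply_eq_zero fun σ => defectOp_undReduce_eq_zero (t := undAct ι G σ s) hxs
  have hnorm : normOp 𝒯 x (defectOp p fr x₀ (undReduce p fr)) s = 0 := by
    have h₁ : defectOp p fr x₀ (undReduce p fr) (undExt ι G x 1 s) = 0 := by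
      rwa [← hts, undExt_comm (Ne.symm hx₀x), undDel_undExt (hx₀xs 1)] at hmin
    rw [normOp_apply_eq_add, h₁, zero_add]
    exact sum_eq_zero fun h _ => defectOp_undReduce_eq_zero (hx₀xs h)
  have hnorm' : ∑ h : {h : G x₀ // h ≠ 1},
      defectOp p fr x (undReduce p fr) (undExt ι G x₀ h s) = 0 :=
    sum_eq_zero fun h _ => defectOp_undReduce_eq_zero (hxx₀s h)
  have hcocycle := congrFun (LinearMap.congr_fun
    (defectOp_cocycle (p := p) (fr := fr) (Ne.symm hx₀x)) (undReduce p fr)) s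
  simp only [LinearMap.add_apply, Module.End.mul_apply, Pi.add_apply] at hcocycle
  rw [normOp_apply_eq_add, hts, hnorm', hfrob, hnorm, hfrob'] at hcocycle
  simpa using hcocycle
termination_by t.complexity
decreasing_by
  · exact UndIdx.complexity_undAct_undDel_lt σ (t.trivialSupport_subset hx₀t)
  · exact UndIdx.complexity_undAct_undDel_lt σ (t.trivialSupport_subset hx₀t)
  · exact UndIdx.complexity_undExt_undDel_lt hx₀t hxs h.2
  · exact UndIdx.complexity_undExt_undDel_lt hx₀t hx₀s h.2

theorem eq_linearCombination_undReduce {M : Type} [AddCommGroup M] [Module 𝒯 M]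
    {F : UndIdx ι G → M} (hF : ∀ x t, x ∉ t.1.1 → defectOp p fr x F t = 0)
    (q : UndIdx ι G) :
    F q = Finsupp.linearCombination 𝒯 (fun b => F b.1) (undReduce p fr q) := by
  by_cases hq : q.trivialSupport.Nonempty
  · set x := q.trivialSupport.min' hq
    have hx : x ∈ q.trivialSupport := min'_mem _ hq
    rw [undReduce, dif_pos hq]
    conv_lhs => rw [← undExt_undDel hx]
    rw [(defectOp_apply_eq_zero_iff _ _ _).1 (hF x _ (notMem_erase _ _)), frobOp_apply]
    simp only [map_sub, map_sum, map_smul]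
    congr 1
    · exact sum_congr rfl fun k _ => congrArg _ (eq_linearCombination_undReduce hF _)
    · exact sum_congr rfl fun h _ => eq_linearCombination_undReduce hF _
  · have hq' : ∀ i ∈ q.1.1, q.1.2 i ≠ 1 := fun i hi h1 =>
      hq ⟨i, UndIdx.mem_trivialSupport.2 ⟨hi, h1⟩⟩
    rw [undReduce_of_forall_ne_one hq', Finsupp.linearCombination_single, one_smul]
termination_by q.complexity
decreasing_by
  · exact UndIdx.complexity_undAct_undDel_lt _ (q.trivialSupport_subset hx)
  · exact UndIdx.complexity_undExt_undDel_lt hx (notMem_erase _ _) h.2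

end Reduction

section Quotient

variable {ι : Type} [LinearOrder ι] {G : ι → Type} [∀ i, CommGroup (G i)]
  [∀ i, Fintype (G i)]
  {𝒯 : Type} [CommRing 𝒯] (p : ι → Polynomial 𝒯) (fr : ι → ∀ i, G i)

theorem linearCombination_undLam {M : Type} [AddCommGroup M] [Module 𝒯 M]
    (F : UndIdx ι G → M) (x : ι) (q : UndIdx ι G) :
    Finsupp.linearCombination 𝒯 F (undLam ι G 𝒯 p fr x q) = defectOp p fr x F q := by
  simp [undLam, defectOp, frobOp_apply, normOp_apply]

theorem undRel_le_ker :
    undRel ι G 𝒯 p fr ≤ LinearMap.ker (Finsupp.linearCombination 𝒯 (undReduce p fr)) := by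
  rw [undRel, Submodule.span_le]
  rintro _ ⟨σ, x, q, hx, rfl⟩
  rw [SetLike.mem_coe, LinearMap.mem_ker, Finsupp.linearCombination_mapDomain,
    linearCombination_undLam, defectOp_comp_undAct]
  exact defectOp_undReduce_eq_zero hx

theorem defectOp_mk_single_eq_zero {x : ι} {t : UndIdx ι G} (hx : x ∉ t.1.1) :
    defectOp p fr x (fun q => (Submodule.Quotient.mk (Finsupp.single q 1) : UND ι G 𝒯 p fr)) t =
      0 := by
  have hsingle :
      Finsupp.linearCombination 𝒯 (fun q : UndIdx ι G => Finsupp.single q (1 : 𝒯)) =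
        LinearMap.id := by
    ext; simp
  have hmk : (Submodule.Quotient.mk (undLam ι G 𝒯 p fr x t) : UND ι G 𝒯 p fr) = 0 := by
    refine (Submodule.Quotient.mk_eq_zero _).2 (Submodule.subset_span ⟨1, x, t, hx, ?_⟩)
    rw [show undAct ι G 1 = id from funext undAct_one, Finsupp.mapDomain_id]
  rw [← linearCombination_undLam, ← hmk]
  exact LinearMap.congr_fun
    ((Finsupp.linearCombination_linear_comp 𝒯 (undRel ι G 𝒯 p fr).mkQ).trans
      (by rw [hsingle, LinearMap.comp_id])) _

noncomputable def undEquivFinsupp :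
    UND ι G 𝒯 p fr ≃ₗ[𝒯] (UndBasisIdx ι G →₀ 𝒯) :=
  .ofLinearMap ((undRel ι G 𝒯 p fr).liftQ _ (undRel_le_ker p fr))
    (Finsupp.linearCombination 𝒯 fun b => Submodule.Quotient.mk (Finsupp.single b.1 1))
    (Finsupp.lhom_ext fun b c => by simp [undReduce_of_forall_ne_one b.2])
    (Submodule.linearMap_qext _ <| Finsupp.lhom_ext fun q c => by
      simp [← eq_linearCombination_undReduce fun _ _ => defectOp_mk_single_eq_zero p fr,
        ← Submodule.Quotient.mk_smul])

end Quotient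

section Cardinality

variable {ι : Type} [Fintype ι] {G : ι → Type} [∀ i, CommGroup (G i)]

open Classical in
noncomputable def undBasisIdxEquivPi : UndBasisIdx ι G ≃ ∀ i, G i where
  toFun q := q.1.1.2
  invFun g := ⟨⟨(({i | g i ≠ 1} : Finset ι), g), fun i hi => by simpa using hi⟩,
    fun i hi => by simpa using hi⟩
  left_inv q := Subtype.ext <| UndIdx.ext (Finset.ext fun i => by
    simpa using ⟨fun h => by_contra fun hi => h (q.1.2 i hi), q.2 i⟩) rfl
  right_inv _ := rfl

theorem card_undBasisIdx [∀ i, Fintype (G i)] :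
    Nat.card (UndBasisIdx ι G) = ∏ i, Fintype.card (G i) := by
  simp [Nat.card_congr undBasisIdxEquivPi, Nat.card_pi]

end Cardinality

theorem stmt10 (ι : Type) [Fintype ι] [LinearOrder ι]
    (G : ι → Type) [∀ i, CommGroup (G i)] [∀ i, Fintype (G i)]
    (𝒯 : Type) [CommRing 𝒯]
    (p : ι → Polynomial 𝒯) (fr : ι → ∀ i, G i) :
    (∃ b : Module.Basis {q : UndIdx ι G // ∀ i ∈ q.1.1, q.1.2 i ≠ 1} 𝒯 (UND ι G 𝒯 p fr),
        ∀ q, b q = Submodule.Quotient.mk (Finsupp.single q.1 (1 : 𝒯))) ∧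
      Nat.card {q : UndIdx ι G // ∀ i ∈ q.1.1, q.1.2 i ≠ 1}
        = ∏ i, Fintype.card (G i) :=
  ⟨⟨.ofRepr (undEquivFinsupp p fr), fun q => by simp [undEquivFinsupp]⟩, card_undBasisIdx⟩
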